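/- Let f and g be homogeneous polynomials on ℝ^N × ℝ^N of degrees r and s respectively. Then {f, g} is a homogeneous polynomial of degree r + s − 2 and ‖{f,g}‖_1 ≤ r s ‖f‖_1 ‖g‖_1. Moreover there exists a seed h of the cyclically symmetric function {f^⊕, g^⊕} with ‖h‖_1 ≤ r s ‖f‖_1 ‖g‖_1. -/

import Mathlib

open MvPolynomial Finset Real

/-- index set for the `2N` variables: `inl j` ↦ `x_j`, `inr j` ↦ `y_j` (indices mod `N`). -/
abbrev Idx (N : ℕ) := Fin N ⊕ Fin N

open Fin.CommRing in
/-- the cyclic shift `τ^s` (`s ∈ ℤ`) acting on polynomials: `τ^s X_j = X_{j+s}`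
(indices mod `N`), separately on the `x` and `y` variables, so that
`(τ^s f)(x,y) = f(τ^s x, τ^s y)`. -/
noncomputable def tauPow (N : ℕ) [NeZero N] (s : ℤ) (f : MvPolynomial (Idx N) ℝ) :
    MvPolynomial (Idx N) ℝ :=
  rename (Sum.map (· + (s : Fin N)) (· + (s : Fin N))) f

/-- `f ↦ f^⊕ := ∑_{l=1}^N τ^l f`. -/
noncomputable def oplus (N : ℕ) [NeZero N] (f : MvPolynomial (Idx N) ℝ) :
    MvPolynomial (Idx N) ℝ :=
  ∑ l ∈ Finset.range N, tauPow N ((l : ℤ) + 1) f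

/-- the polynomial norm `‖f‖_R`; for a homogeneous polynomial of degree `s` it equals
`R^s ∑_{|j|+|k|=s} |f_{j,k}|`. -/
noncomputable def pnorm {N : ℕ} (R : ℝ) (f : MvPolynomial (Idx N) ℝ) : ℝ :=
  ∑ d ∈ f.support, |f.coeff d| * R ^ (d.sum fun _ e => e)

/-- the Poisson bracket `{f,g} = ∑_j (∂f/∂x_j ∂g/∂y_j − ∂f/∂y_j ∂g/∂x_j)`. -/
noncomputable def poisson (N : ℕ) (f g : MvPolynomial (Idx N) ℝ) : MvPolynomial (Idx N) ℝ :=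
  ∑ j : Fin N,
    (pderiv (Sum.inl j) f * pderiv (Sum.inr j) g - pderiv (Sum.inr j) f * pderiv (Sum.inl j) g)

/-! The ℓ¹ norm of the coefficients is subadditive, submultiplicative and invariant under
injective renaming of the variables, and `∂ᵢ` multiplies the coefficient of `x^d` by `dᵢ`;
summing over `i` shows `∑ᵢ ‖∂ᵢ f‖ ≤ r ‖f‖` for `f` homogeneous of degree `r`. Bounding every
`∂g` in the bracket by `∑ᵢ ‖∂ᵢ g‖ ≤ s ‖g‖` gives `‖{f, g}‖ ≤ r s ‖f‖ ‖g‖`.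

For the seed take `h = {f, g^⊕}`. The bracket commutes with the shifts `τ` and `g^⊕` is
shift-invariant, so `h^⊕ = {f^⊕, g^⊕}`. Each `∂ᵢ g^⊕` is a sum of shifted copies of `∂ᵢ' g` over
pairwise distinct `i'`, hence `‖∂ᵢ g^⊕‖ ≤ ∑ᵢ' ‖∂ᵢ' g‖ ≤ s ‖g‖` and the same estimate applies. -/

namespace MvPolynomial

variable {σ : Type*}

noncomputable def l1Norm (p : MvPolynomial σ ℝ) : ℝ := ∑ d ∈ p.support, |p.coeff d|

lemma l1Norm_nonneg (p : MvPolynomial σ ℝ) : 0 ≤ l1Norm p :=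
  sum_nonneg fun _ _ => abs_nonneg _

lemma l1Norm_eq_sum_of_support_subset {p : MvPolynomial σ ℝ} {t : Finset (σ →₀ ℕ)}
    (h : p.support ⊆ t) : l1Norm p = ∑ d ∈ t, |p.coeff d| :=
  sum_subset h fun d _ hd => by rw [notMem_support_iff.mp hd, abs_zero]

lemma l1Norm_zero : l1Norm (0 : MvPolynomial σ ℝ) = 0 := by simp [l1Norm]

lemma l1Norm_add_le (p q : MvPolynomial σ ℝ) : l1Norm (p + q) ≤ l1Norm p + l1Norm q := by
  classical
  rw [l1Norm_eq_sum_of_support_subset support_add,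
    l1Norm_eq_sum_of_support_subset (p := p) subset_union_left,
    l1Norm_eq_sum_of_support_subset (p := q) subset_union_right, ← sum_add_distrib]
  exact sum_le_sum fun d _ => by rw [coeff_add]; exact abs_add_le _ _

lemma l1Norm_neg (p : MvPolynomial σ ℝ) : l1Norm (-p) = l1Norm p := by
  simp [l1Norm, support_neg]

lemma l1Norm_sub_le (p q : MvPolynomial σ ℝ) : l1Norm (p - q) ≤ l1Norm p + l1Norm q := by
  simpa [sub_eq_add_neg, l1Norm_neg] using l1Norm_add_le p (-q)

lemma l1Norm_sum_le {ι : Type*} (t : Finset ι) (F : ι → MvPolynomial σ ℝ) :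
    l1Norm (∑ i ∈ t, F i) ≤ ∑ i ∈ t, l1Norm (F i) :=
  le_sum_of_subadditive l1Norm l1Norm_zero.le l1Norm_add_le t F

lemma l1Norm_monomial (d : σ →₀ ℕ) (c : ℝ) : l1Norm (monomial d c) = |c| := by
  classical
  by_cases hc : c = 0
  · simp [l1Norm, hc]
  · simp [l1Norm, support_monomial, hc]

lemma l1Norm_mul_le (p q : MvPolynomial σ ℝ) : l1Norm (p * q) ≤ l1Norm p * l1Norm q := by
  conv_lhs => rw [p.as_sum, q.as_sum, sum_mul_sum]
  calc _ ≤ ∑ d ∈ p.support, ∑ e ∈ q.support,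
          l1Norm (monomial d (p.coeff d) * monomial e (q.coeff e)) :=
        (l1Norm_sum_le _ _).trans (sum_le_sum fun d _ => l1Norm_sum_le _ _)
    _ = l1Norm p * l1Norm q := by
        simp only [monomial_mul, l1Norm_monomial, abs_mul]
        rw [l1Norm, l1Norm, sum_mul_sum]

lemma l1Norm_rename_of_injective {τ : Type*} {f : σ → τ} (hf : Function.Injective f)
    (p : MvPolynomial σ ℝ) : l1Norm (rename f p) = l1Norm p := by
  classical
  rw [l1Norm, support_rename_of_injective hf,
    sum_image fun _ _ _ _ h => Finsupp.mapDomain_injective hf h]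
  exact sum_congr rfl fun d _ => by rw [coeff_rename_mapDomain f hf]

lemma l1Norm_pderiv_le (p : MvPolynomial σ ℝ) (i : σ) :
    l1Norm (pderiv i p) ≤ ∑ d ∈ p.support, |p.coeff d| * d i := by
  conv_lhs => rw [p.as_sum, map_sum]
  refine (l1Norm_sum_le _ _).trans_eq (sum_congr rfl fun d _ => ?_)
  rw [pderiv_monomial, l1Norm_monomial, abs_mul, Nat.abs_cast]

lemma IsHomogeneous.sum_l1Norm_pderiv_le [Fintype σ] {p : MvPolynomial σ ℝ} {n : ℕ}
    (hp : p.IsHomogeneous n) : ∑ i, l1Norm (pderiv i p) ≤ n * l1Norm p := by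
  calc ∑ i, l1Norm (pderiv i p) ≤ ∑ i, ∑ d ∈ p.support, |p.coeff d| * d i :=
        sum_le_sum fun i _ => l1Norm_pderiv_le p i
    _ = ∑ d ∈ p.support, |p.coeff d| * n := by
        rw [sum_comm]
        refine sum_congr rfl fun d hd => ?_
        rw [← mul_sum, ← Nat.cast_sum, ← Finsupp.degree_eq_sum, Finsupp.degree_apply,
          ← hp.degree_eq_sum_deg_support hd]
    _ = n * l1Norm p := by rw [← sum_mul, mul_comm, l1Norm]

end MvPolynomial

section Bracket

variable {N : ℕ}

lemma pnorm_one_eq_l1Norm (f : MvPolynomial (Idx N) ℝ) : pnorm 1 f = l1Norm f := by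
  simp [pnorm, l1Norm]

lemma poisson_sum_left {ι : Type*} (t : Finset ι) (F : ι → MvPolynomial (Idx N) ℝ)
    (g : MvPolynomial (Idx N) ℝ) :
    poisson N (∑ i ∈ t, F i) g = ∑ i ∈ t, poisson N (F i) g := by
  simp only [poisson, map_sum, sum_mul, ← sum_sub_distrib]
  exact sum_comm

lemma poisson_isHomogeneous {f g : MvPolynomial (Idx N) ℝ} {r s : ℕ}
    (hf : f.IsHomogeneous r) (hg : g.IsHomogeneous s) :
    (poisson N f g).IsHomogeneous (r + s - 2) := by
  rcases Nat.eq_zero_or_pos r with rfl | hr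
  · obtain ⟨c, rfl⟩ : ∃ c, f = C c :=
      ⟨_, totalDegree_eq_zero_iff_eq_C.mp ((totalDegree_zero_iff_isHomogeneous _).mpr hf)⟩
    simpa [poisson] using isHomogeneous_zero _ _ _
  rcases Nat.eq_zero_or_pos s with rfl | hs
  · obtain ⟨c, rfl⟩ : ∃ c, g = C c :=
      ⟨_, totalDegree_eq_zero_iff_eq_C.mp ((totalDegree_zero_iff_isHomogeneous _).mpr hg)⟩
    simpa [poisson] using isHomogeneous_zero _ _ _
  rw [show r + s - 2 = (r - 1) + (s - 1) by omega]
  exact IsHomogeneous.sum _ _ _ fun j _ =>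
    (hf.pderiv.mul hg.pderiv).sub (hf.pderiv.mul hg.pderiv)

lemma l1Norm_poisson_le (f g : MvPolynomial (Idx N) ℝ) {C : ℝ}
    (hg : ∀ i, l1Norm (pderiv i g) ≤ C) :
    l1Norm (poisson N f g) ≤ (∑ i, l1Norm (pderiv i f)) * C := by
  have term_le : ∀ i i', l1Norm (pderiv i f * pderiv i' g) ≤ l1Norm (pderiv i f) * C :=
    fun i i' => (l1Norm_mul_le _ _).trans (mul_le_mul_of_nonneg_left (hg i') (l1Norm_nonneg _))
  calc l1Norm (poisson N f g)
      ≤ ∑ j, (l1Norm (pderiv (Sum.inl j) f) * C + l1Norm (pderiv (Sum.inr j) f) * C) :=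
        (l1Norm_sum_le _ _).trans <| sum_le_sum fun j _ =>
          (l1Norm_sub_le _ _).trans (add_le_add (term_le _ _) (term_le _ _))
    _ = (∑ i, l1Norm (pderiv i f)) * C := by
        rw [Fintype.sum_sum_type, sum_add_distrib, add_mul, sum_mul, sum_mul]

lemma l1Norm_poisson_le_of_isHomogeneous {f g G : MvPolynomial (Idx N) ℝ} {r s : ℕ}
    (hf : f.IsHomogeneous r) (hg : g.IsHomogeneous s)
    (hG : ∀ i, l1Norm (pderiv i G) ≤ ∑ i', l1Norm (pderiv i' g)) :
    l1Norm (poisson N f G) ≤ r * s * l1Norm f * l1Norm g :=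
  calc l1Norm (poisson N f G)
      ≤ (∑ i, l1Norm (pderiv i f)) * ∑ i', l1Norm (pderiv i' g) := l1Norm_poisson_le f G hG
    _ ≤ (r * l1Norm f) * (s * l1Norm g) :=
        mul_le_mul hf.sum_l1Norm_pderiv_le hg.sum_l1Norm_pderiv_le
          (sum_nonneg fun _ _ => l1Norm_nonneg _) (by positivity [l1Norm_nonneg f])
    _ = r * s * l1Norm f * l1Norm g := by ring

lemma rename_sumCongr_poisson (e : Equiv.Perm (Fin N)) (f g : MvPolynomial (Idx N) ℝ) :
    rename (Equiv.sumCongr e e) (poisson N f g) =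
      poisson N (rename (Equiv.sumCongr e e) f) (rename (Equiv.sumCongr e e) g) := by
  have key := pderiv_rename (R := ℝ) (Equiv.sumCongr e e).injective
  simp only [poisson, map_sum, map_sub, map_mul]
  refine Fintype.sum_equiv e _ _ fun j => ?_
  simp only [← key]
  rfl

end Bracket

section Shifts

variable {N : ℕ} [NeZero N]

-- `tauPow N s = rename (shift s)` by definition.
abbrev shift (c : Fin N) : Equiv.Perm (Idx N) :=
  Equiv.sumCongr (Equiv.addRight c) (Equiv.addRight c)

lemma shift_trans_shift (c c' : Fin N) : (shift c).trans (shift c') = shift (c + c') := by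
  ext (j | j) <;> simp

lemma injective_shift_symm_apply (i : Idx N) : Function.Injective fun c => (shift c).symm i := by
  rcases i with j | j <;> intro c c' h <;> simpa using h

lemma oplus_eq_sum_rename_shift (f : MvPolynomial (Idx N) ℝ) :
    oplus N f = ∑ c : Fin N, rename (shift c) f := by
  rw [oplus, ← Fin.sum_univ_eq_sum_range (fun l => tauPow N ((l : ℤ) + 1) f)]
  refine Fintype.sum_equiv (Equiv.addRight 1) _ _ fun k => ?_
  simp only [tauPow, Equiv.coe_addRight]
  congr 3 <;> push_cast [Fin.cast_val_eq_self] <;> rfl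

lemma rename_shift_oplus (c : Fin N) (f : MvPolynomial (Idx N) ℝ) :
    rename (shift c) (oplus N f) = oplus N f := by
  rw [oplus_eq_sum_rename_shift, map_sum]
  refine Fintype.sum_equiv (Equiv.addRight c) _ _ fun k => ?_
  rw [rename_rename, ← Equiv.coe_trans, shift_trans_shift, Equiv.coe_addRight]

lemma oplus_poisson {f G : MvPolynomial (Idx N) ℝ} (hG : ∀ c, rename (shift c) G = G) :
    oplus N (poisson N f G) = poisson N (oplus N f) G := by
  simp only [oplus_eq_sum_rename_shift, rename_sumCongr_poisson, hG, poisson_sum_left]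

lemma l1Norm_pderiv_oplus_le (g : MvPolynomial (Idx N) ℝ) (i : Idx N) :
    l1Norm (pderiv i (oplus N g)) ≤ ∑ i', l1Norm (pderiv i' g) := by
  have pderiv_rename_shift : ∀ c,
      pderiv i (rename (shift c) g) = rename (shift c) (pderiv ((shift c).symm i) g) := by
    intro c
    conv_lhs => rw [← (shift c).apply_symm_apply i]
    exact pderiv_rename (shift c).injective _ _
  calc l1Norm (pderiv i (oplus N g)) ≤ ∑ c, l1Norm (pderiv ((shift c).symm i) g) := by
        rw [oplus_eq_sum_rename_shift, map_sum]
        refine (l1Norm_sum_le _ _).trans_eq (sum_congr rfl fun c _ => ?_)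
        rw [pderiv_rename_shift, l1Norm_rename_of_injective (shift c).injective]
    _ = ∑ i' ∈ univ.image fun c => (shift c).symm i, l1Norm (pderiv i' g) :=
        (sum_image (f := fun i' => l1Norm (pderiv i' g))
          (injective_shift_symm_apply i).injOn).symm
    _ ≤ ∑ i', l1Norm (pderiv i' g) := sum_le_univ_sum_of_nonneg fun _ => l1Norm_nonneg _

end Shifts

/-- For `f, g` homogeneous of degrees `r, s`, `{f,g}` is homogeneous of
degree `r+s−2` with `‖{f,g}‖₁ ≤ r s ‖f‖₁ ‖g‖₁`, and `{f^⊕, g^⊕}` admits a seed `h` with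
`‖h‖₁ ≤ r s ‖f‖₁ ‖g‖₁`. -/
theorem poisson_norm_estimate (N : ℕ) [NeZero N]
    (r s : ℕ) (f g : MvPolynomial (Idx N) ℝ)
    (hf : f.IsHomogeneous r) (hg : g.IsHomogeneous s) :
    (poisson N f g).IsHomogeneous (r + s - 2) ∧
    pnorm 1 (poisson N f g) ≤ r * s * pnorm 1 f * pnorm 1 g ∧
    ∃ h : MvPolynomial (Idx N) ℝ,
      oplus N h = poisson N (oplus N f) (oplus N g) ∧
      pnorm 1 h ≤ r * s * pnorm 1 f * pnorm 1 g := by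
  simp only [pnorm_one_eq_l1Norm]
  have hg_pderiv : ∀ i, l1Norm (pderiv i g) ≤ ∑ i', l1Norm (pderiv i' g) :=
    fun i => single_le_sum (fun i' _ => l1Norm_nonneg (pderiv i' g)) (mem_univ i)
  exact ⟨poisson_isHomogeneous hf hg, l1Norm_poisson_le_of_isHomogeneous hf hg hg_pderiv,
    poisson N f (oplus N g), oplus_poisson (rename_shift_oplus · g),
    l1Norm_poisson_le_of_isHomogeneous hf hg (l1Norm_pderiv_oplus_le g)⟩
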